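/- Let η ∈ D_r with k(η) ≥ 1 and suppose e^{2a(n)} = c n^{−d/k(η)} for a fixed constant c > 0, with b a fixed real. Then the difference between the expected numbers of copies of η̊ and of η tends to 0: lim_{n→∞} |E_{a(n),b}[X_n(η̊)] − E_{a(n),b}[X_n(η)]| = 0. -/

import Mathlib

open scoped ENNReal BigOperators
open Filter

namespace Ising

noncomputable section

/-- The `L_p` norm (`1 ≤ p ≤ ∞`) of an integer vector, via the `PiLp` norm on `ℝ^d`. -/
def lpNorm (p : ℝ≥0∞) [Fact (1 ≤ p)] {d : ℕ} (z : Fin d → ℤ) : ℝ :=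
  ‖(WithLp.equiv p (Fin d → ℝ)).symm (fun i => (z i : ℝ))‖

lemma lpNorm_neg (p : ℝ≥0∞) [Fact (1 ≤ p)] {d : ℕ} (z : Fin d → ℤ) :
    lpNorm p (fun i => -(z i)) = lpNorm p z := by
  unfold lpNorm
  have h : ((WithLp.equiv p (Fin d → ℝ)).symm (fun i => ((-(z i) : ℤ) : ℝ)))
      = -((WithLp.equiv p (Fin d → ℝ)).symm fun i => ((z i : ℤ) : ℝ)) := by
    have : (fun i => ((-(z i) : ℤ) : ℝ)) = -(fun i => ((z i : ℤ) : ℝ)) := by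
      funext i; simp
    rw [this]; rfl
  rw [h, norm_neg]

/-- Vertex set of the `d`-dimensional lattice torus of size `n`:
`{0, …, n-1}^d` with componentwise arithmetic modulo `n`. -/
abbrev Vtx (d n : ℕ) := Fin d → ZMod n

/-- Configurations: a spin (`true` = `+1`, `false` = `-1`) at each vertex. -/
abbrev Conf (d n : ℕ) := Vtx d n → Bool

/-- The spin value (`±1`) of a Boolean. -/
def spin (s : Bool) : ℝ := if s then 1 else -1

/-- The lattice torus `G_n`: distinct vertices `x, y` are adjacent iff `y - x`
(componentwise modulo `n`) admits an integer representative `z` with `‖z‖_p ≤ ρ`. -/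
def torus (d ρ : ℕ) (p : ℝ≥0∞) [Fact (1 ≤ p)] (n : ℕ) : SimpleGraph (Vtx d n) where
  Adj x y := x ≠ y ∧ ∃ z : Fin d → ℤ,
    (∀ i, ((z i : ZMod n) = y i - x i)) ∧ lpNorm p z ≤ (ρ : ℝ)
  symm := ⟨by
    rintro x y ⟨hxy, z, hz, hn⟩
    refine ⟨hxy.symm, fun i => -(z i), fun i => ?_, by rw [lpNorm_neg]; exact hn⟩
    push_cast
    rw [hz i]; ring⟩
  loopless := ⟨fun x h => h.1 rfl⟩

/-- The corresponding (infinite) lattice graph on `ℤ^d`, used as a reference to define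
local configurations: distinct `x, y` are adjacent iff `‖y - x‖_p ≤ ρ`. -/
def latticeZ (d ρ : ℕ) (p : ℝ≥0∞) [Fact (1 ≤ p)] : SimpleGraph (Fin d → ℤ) where
  Adj x y := x ≠ y ∧ lpNorm p (fun i => y i - x i) ≤ (ρ : ℝ)
  symm := ⟨by
    rintro x y ⟨hxy, hn⟩
    refine ⟨hxy.symm, ?_⟩
    have h : (fun i => x i - y i) = (fun i => -(y i - x i)) := by funext i; ring
    rw [h, lpNorm_neg]; exact hn⟩
  loopless := ⟨fun x h => h.1 rfl⟩

/-- The ball `B(x,r)` of center `x` and radius `r` for the graph distance. -/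
def gball {V : Type*} (G : SimpleGraph V) (x : V) (r : ℕ) : Set V :=
  {y | G.Reachable x y ∧ G.dist x y ≤ r}

/-- The reference ball `B(0,r)` (in `ℤ^d`). -/
def refBall (d ρ : ℕ) (p : ℝ≥0∞) [Fact (1 ≤ p)] (r : ℕ) : Set (Fin d → ℤ) :=
  gball (latticeZ d ρ p) 0 r

/-- A local configuration of radius `r`: an element of `D_r = {-1,+1}^{B(0,r)}`. -/
abbrev LocalConfig (d ρ : ℕ) (p : ℝ≥0∞) [Fact (1 ≤ p)] (r : ℕ) :=
  ↥(refBall d ρ p r) → Bool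

/-- `k(η)`: the number of positive vertices of a local configuration `η`. -/
def kOf (d ρ : ℕ) (p : ℝ≥0∞) [Fact (1 ≤ p)] (r : ℕ) (η : LocalConfig d ρ p r) : ℕ :=
  Set.ncard {v : ↥(refBall d ρ p r) | η v = true}

/-- The common degree of the vertices (number of neighbors of `0` in the lattice). -/
def degZ (d ρ : ℕ) (p : ℝ≥0∞) [Fact (1 ≤ p)] : ℕ :=
  Set.ncard {z : Fin d → ℤ | (latticeZ d ρ p).Adj 0 z}

/-- The perimeter `γ(η) = V·k(η) - 2·#{edges with both endpoints positive}`; the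
number of ordered adjacent pairs of positive vertices is twice the number of such edges. -/
def perim (d ρ : ℕ) (p : ℝ≥0∞) [Fact (1 ≤ p)] (r : ℕ) (η : LocalConfig d ρ p r) : ℕ :=
  degZ d ρ p * kOf d ρ p r η -
    Set.ncard {q : ↥(refBall d ρ p r) × ↥(refBall d ρ p r) |
      (latticeZ d ρ p).Adj q.1.1 q.2.1 ∧ η q.1 = true ∧ η q.2 = true}

/-- `η` is clean if every vertex at graph distance exactly `r` from `0` is negative. -/
def Clean (d ρ : ℕ) (p : ℝ≥0∞) [Fact (1 ≤ p)] (r : ℕ) (η : LocalConfig d ρ p r) : Prop :=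
  ∀ v : ↥(refBall d ρ p r), (latticeZ d ρ p).dist 0 v.1 = r → η v = false

/-- The translate `η_x` of `η` occurs at `x` in the configuration `σ`. -/
def occursAt (d ρ : ℕ) (p : ℝ≥0∞) [Fact (1 ≤ p)] (r n : ℕ) (η : LocalConfig d ρ p r)
    (x : Vtx d n) (σ : Conf d n) : Prop :=
  ∀ v : ↥(refBall d ρ p r), σ (x + fun i => ((v.1 i : ZMod n))) = η v

/-- The indicator `I_x^η` (as a real number). -/
def occInd (d ρ : ℕ) (p : ℝ≥0∞) [Fact (1 ≤ p)] (r n : ℕ) (η : LocalConfig d ρ p r)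
    (x : Vtx d n) (σ : Conf d n) : ℝ := by
  classical exact if occursAt d ρ p r n η x σ then 1 else 0

/-- `X_n(η) = Σ_x I_x^η`: the number of copies of `η` in `G_n`. -/
def Xcount (d ρ : ℕ) (p : ℝ≥0∞) [Fact (1 ≤ p)] (r n : ℕ) (η : LocalConfig d ρ p r)
    (σ : Conf d n) : ℕ :=
  Set.ncard {x : Vtx d n | occursAt d ρ p r n η x σ}

/-- The interaction term `Σ_{{x,y} ∈ E_n} σ(x)σ(y)`. -/
def pairSum (d ρ : ℕ) (p : ℝ≥0∞) [Fact (1 ≤ p)] (n : ℕ) (σ : Conf d n) : ℝ :=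
  ∑' e : ↥(torus d ρ p n).edgeSet,
    Sym2.lift ⟨fun x y => spin (σ x) * spin (σ y), fun _ _ => mul_comm _ _⟩
      (e : Sym2 (Vtx d n))

/-- The Hamiltonian `a Σ_x σ(x) + b Σ_{{x,y} ∈ E_n} σ(x)σ(y)`. -/
def hamiltonian (d ρ : ℕ) (p : ℝ≥0∞) [Fact (1 ≤ p)] (n : ℕ) (a b : ℝ) (σ : Conf d n) : ℝ :=
  a * (∑' x : Vtx d n, spin (σ x)) + b * pairSum d ρ p n σ

/-- The (unnormalized) Gibbs weight of a configuration. -/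
def weight (d ρ : ℕ) (p : ℝ≥0∞) [Fact (1 ≤ p)] (n : ℕ) (a b : ℝ) (σ : Conf d n) : ℝ :=
  Real.exp (hamiltonian d ρ p n a b σ)

/-- The partition function `Z_{a,b}`. -/
def partZ (d ρ : ℕ) (p : ℝ≥0∞) [Fact (1 ≤ p)] (n : ℕ) (a b : ℝ) : ℝ :=
  ∑' σ : Conf d n, weight d ρ p n a b σ

/-- The Ising (Gibbs) probability `μ_{a,b}(A)` of an event `A ⊆ X_n`. -/
def prob (d ρ : ℕ) (p : ℝ≥0∞) [Fact (1 ≤ p)] (n : ℕ) (a b : ℝ) (A : Set (Conf d n)) : ℝ :=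
  (∑' σ : ↥A, weight d ρ p n a b (σ : Conf d n)) / partZ d ρ p n a b

/-- The expectation `E_{a,b}[f]`. -/
def expect (d ρ : ℕ) (p : ℝ≥0∞) [Fact (1 ≤ p)] (n : ℕ) (a b : ℝ) (f : Conf d n → ℝ) : ℝ :=
  (∑' σ : Conf d n, weight d ρ p n a b σ * f σ) / partZ d ρ p n a b

/-- The variance `Var_{a,b}[f]`. -/
def varE (d ρ : ℕ) (p : ℝ≥0∞) [Fact (1 ≤ p)] (n : ℕ) (a b : ℝ) (f : Conf d n → ℝ) : ℝ :=
  expect d ρ p n a b (fun σ => (f σ - expect d ρ p n a b f) ^ 2)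

/-- The event `{I_x^η = 1}`. -/
def event (d ρ : ℕ) (p : ℝ≥0∞) [Fact (1 ≤ p)] (r n : ℕ) (η : LocalConfig d ρ p r)
    (x : Vtx d n) : Set (Conf d n) :=
  {σ | occursAt d ρ p r n η x σ}

/-- The event that a configuration agrees with `σ₀` on `W`. -/
def agreeOn (d n : ℕ) (W : Set (Vtx d n)) (σ₀ : Conf d n) : Set (Conf d n) :=
  {τ | ∀ x ∈ W, τ x = σ₀ x}

/-- The conditional probability `μ_{a,b}(A | σ₀ on W)`. -/
def condProb (d ρ : ℕ) (p : ℝ≥0∞) [Fact (1 ≤ p)] (n : ℕ) (a b : ℝ) (A : Set (Conf d n))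
    (W : Set (Vtx d n)) (σ₀ : Conf d n) : ℝ :=
  prob d ρ p n a b (A ∩ agreeOn d n W σ₀) / prob d ρ p n a b (agreeOn d n W σ₀)

/-- The exterior boundary `δV` of a set of vertices of the torus. -/
def boundary (d ρ : ℕ) (p : ℝ≥0∞) [Fact (1 ≤ p)] (n : ℕ) (V : Set (Vtx d n)) :
    Set (Vtx d n) :=
  {y | y ∉ V ∧ ∃ x ∈ V, (torus d ρ p n).Adj x y}

/-- The ball `B(x,R)` in the torus. -/
def tball (d ρ : ℕ) (p : ℝ≥0∞) [Fact (1 ≤ p)] (n : ℕ) (x : Vtx d n) (R : ℕ) :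
    Set (Vtx d n) :=
  gball (torus d ρ p n) x R

/-- The distribution (probability mass function on `ℕ`) of an integer-valued observable. -/
def lawOf (d ρ : ℕ) (p : ℝ≥0∞) [Fact (1 ≤ p)] (n : ℕ) (a b : ℝ) (X : Conf d n → ℕ) :
    ℕ → ℝ :=
  fun m => prob d ρ p n a b {σ | X σ = m}

/-- The distribution on `ℕ` of a real-valued (integer-valued in fact) observable. -/
def lawR (d ρ : ℕ) (p : ℝ≥0∞) [Fact (1 ≤ p)] (n : ℕ) (a b : ℝ) (X : Conf d n → ℝ) :
    ℕ → ℝ :=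
  fun m => prob d ρ p n a b {σ | X σ = (m : ℝ)}

/-- The Poisson distribution with parameter `θ`, as a pmf on `ℕ`. -/
def poissonPMF (θ : ℝ) : ℕ → ℝ :=
  fun m => Real.exp (-θ) * θ ^ m / (Nat.factorial m : ℝ)

/-- Total variation distance between two distributions on `ℕ`:
`d_TV(μ,ν) = sup_A |μ(A) - ν(A)|`. -/
def dTV (f g : ℕ → ℝ) : ℝ :=
  ⨆ A : Set ℕ, |(∑' m : ↥A, f (m : ℕ)) - ∑' m : ↥A, g (m : ℕ)|

/-- The clean extension `η̊ ∈ D_{r+1}` of `η ∈ D_r`: it agrees with `η` on `B(0,r)` and is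
negative at every vertex at distance exactly `r+1` from `0`. -/
def ringExt (d ρ : ℕ) (p : ℝ≥0∞) [Fact (1 ≤ p)] (r : ℕ) (η : LocalConfig d ρ p r) :
    LocalConfig d ρ p (r + 1) := by
  classical exact fun v => if h : v.1 ∈ refBall d ρ p r then η ⟨v.1, h⟩ else false

/-- `D_r(η) = {η' ∈ D_r : V_+(η') ⊇ V_+(η)}`. -/
def Dfam (d ρ : ℕ) (p : ℝ≥0∞) [Fact (1 ≤ p)] (r : ℕ) (η : LocalConfig d ρ p r) :
    Set (LocalConfig d ρ p r) :=
  {η' | ∀ v, η v = true → η' v = true}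

/-- `Ī_x^η = Σ_{η' ∈ D_r(η)} I_x^{η'}`. -/
def barInd (d ρ : ℕ) (p : ℝ≥0∞) [Fact (1 ≤ p)] (r n : ℕ) (η : LocalConfig d ρ p r)
    (x : Vtx d n) (σ : Conf d n) : ℝ :=
  ∑' η' : ↥(Dfam d ρ p r η), occInd d ρ p r n (η' : LocalConfig d ρ p r) x σ

/-- `X̄_n(η) = Σ_x Ī_x^η`. -/
def Xbar (d ρ : ℕ) (p : ℝ≥0∞) [Fact (1 ≤ p)] (r n : ℕ) (η : LocalConfig d ρ p r)
    (σ : Conf d n) : ℝ :=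
  ∑' x : Vtx d n, barInd d ρ p r n η x σ

/-- The closed neighbourhood `B̄ = B ∪ δB` of a torus ball. -/
def cball (d ρ : ℕ) (p : ℝ≥0∞) [Fact (1 ≤ p)] (n : ℕ) (x : Vtx d n) (r : ℕ) :
    Set (Vtx d n) :=
  tball d ρ p n x r ∪ boundary d ρ p n (tball d ρ p n x r)

/-- One step of the connectivity relation between the balls of radius `r` centered at the
entries of a tuple: `B̄(x_i) ∩ B(x_j) ≠ ∅`. -/
def stepRel (d ρ : ℕ) (p : ℝ≥0∞) [Fact (1 ≤ p)] (n r : ℕ) {l : ℕ} (x : Fin l → Vtx d n)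
    (i j : Fin l) : Prop :=
  (cball d ρ p n (x i) r ∩ tball d ρ p n (x j) r).Nonempty

/-- The number of equivalence classes, for the connectivity relation, of the set of balls
`{B(x_1,r), …, B(x_l,r)}`. -/
def numClasses (d ρ : ℕ) (p : ℝ≥0∞) [Fact (1 ≤ p)] (n r : ℕ) {l : ℕ}
    (x : Fin l → Vtx d n) : ℕ :=
  Set.ncard (Set.range fun i : Fin l =>
    {j : Fin l | Relation.EqvGen (stepRel d ρ p n r x) i j})

/-- `C_l(s)`: the set of `l`-tuples of vertices whose set of balls of radius `r` is composed
of exactly `s` equivalence classes for the connectivity relation. -/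
def tupleClass (d ρ : ℕ) (p : ℝ≥0∞) [Fact (1 ≤ p)] (n r l s : ℕ) :
    Set (Fin l → Vtx d n) :=
  {x | numClasses d ρ p n r x = s}


/-!
A copy of `η` at `x` fails to be a copy of `η̊` only if some site `x + w`, with `w` in the shell
`B(0,r+1) \ B(0,r)`, carries a plus spin. On that event the `k(η) + 1` plus spins of `η` and of
`x + w` can be set to minus; this is injective and, since every vertex has at most `(2ρ+1)^d`
neighbours, multiplies the Gibbs weight by at least `e^{-2(a + |b|(2ρ+1)^d)(k+1)}`. Each of the
`n^d · |shell|` such events therefore has probability `O(e^{2a(k+1)}) = O(n^{-d-d/k})`, so the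
two expectations differ by `O(n^{-d/k})`.
-/

theorem _root_.SimpleGraph.abs_sum_edgeFinset_sub_le {V : Type*} [Fintype V] [DecidableEq V]
    (G : SimpleGraph V) [DecidableRel G.Adj] (f g : Sym2 V → ℝ)
    (hf : ∀ e, |f e| ≤ 1) (hg : ∀ e, |g e| ≤ 1) (P : Finset V)
    (hfg : ∀ e, (∀ y ∈ e, y ∉ P) → f e = g e) :
    |∑ e ∈ G.edgeFinset, f e - ∑ e ∈ G.edgeFinset, g e| ≤ 2 * ∑ y ∈ P, (G.degree y : ℝ) := by
  have hpoint : ∀ e, |f e - g e| ≤ ∑ y ∈ P, 2 * (if y ∈ e then (1 : ℝ) else 0) := by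
    intro e
    by_cases he : ∃ y ∈ P, y ∈ e
    · obtain ⟨y, hyP, hye⟩ := he
      calc |f e - g e| ≤ |f e| + |g e| := abs_sub _ _
        _ ≤ 2 * (if y ∈ e then (1 : ℝ) else 0) := by rw [if_pos hye]; linarith [hf e, hg e]
        _ ≤ _ := Finset.single_le_sum (f := fun y => 2 * (if y ∈ e then (1 : ℝ) else 0))
            (fun _ _ => by positivity) hyP
    · push Not at he
      rw [hfg e fun y hye hyP => he y hyP hye, sub_self, abs_zero]
      positivity
  calc |∑ e ∈ G.edgeFinset, f e - ∑ e ∈ G.edgeFinset, g e|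
      ≤ ∑ e ∈ G.edgeFinset, |f e - g e| := by
        rw [← Finset.sum_sub_distrib]; exact Finset.abs_sum_le_sum_abs _ _
    _ ≤ ∑ e ∈ G.edgeFinset, ∑ y ∈ P, 2 * (if y ∈ e then (1 : ℝ) else 0) :=
        Finset.sum_le_sum fun e _ => hpoint e
    _ = 2 * ∑ y ∈ P, (G.degree y : ℝ) := by
        rw [Finset.sum_comm, Finset.mul_sum]
        refine Finset.sum_congr rfl fun y _ => ?_
        rw [← Finset.mul_sum, Finset.sum_boole, ← G.incidenceFinset_eq_filter,
          G.card_incidenceFinset_eq_degree]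

section Geometry

variable {d ρ : ℕ} {p : ℝ≥0∞} [Fact (1 ≤ p)]

theorem abs_le_lpNorm (z : Fin d → ℤ) (i : Fin d) : (|z i| : ℝ) ≤ lpNorm p z := by
  simpa [lpNorm, Real.norm_eq_abs] using
    PiLp.norm_apply_le ((WithLp.equiv p (Fin d → ℝ)).symm fun i => (z i : ℝ)) i

theorem abs_le_of_lpNorm_le {z : Fin d → ℤ} (h : lpNorm p z ≤ ρ) (i : Fin d) :
    |z i| ≤ ρ := by
  exact_mod_cast (abs_le_lpNorm z i).trans h

theorem abs_sub_le_of_walk {u v : Fin d → ℤ} (w : (latticeZ d ρ p).Walk u v) (i : Fin d) :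
    |v i - u i| ≤ ρ * w.length := by
  induction w with
  | nil => simp
  | @cons x y z h w ih =>
    calc |z i - x i| ≤ |z i - y i| + |y i - x i| := abs_sub_le _ _ _
      _ ≤ ρ * w.length + ρ := add_le_add ih (abs_le_of_lpNorm_le h.2 i)
      _ = ρ * (w.cons h).length := by rw [SimpleGraph.Walk.length_cons]; push_cast; ring

theorem abs_le_of_mem_refBall {r : ℕ} {v : Fin d → ℤ} (hv : v ∈ refBall d ρ p r) (i : Fin d) :
    |v i| ≤ ρ * r := by
  obtain ⟨w, hw⟩ := hv.1.exists_walk_length_eq_dist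
  calc |v i| = |v i - (0 : Fin d → ℤ) i| := by simp
    _ ≤ ρ * w.length := abs_sub_le_of_walk w i
    _ ≤ ρ * r := by rw [hw]; gcongr; exact_mod_cast hv.2

theorem refBall_finite (r : ℕ) : (refBall d ρ p r).Finite :=
  (Set.finite_Icc (-(ρ * r : ℤ) • 1 : Fin d → ℤ) ((ρ * r : ℤ) • 1)).subset fun v hv =>
    ⟨fun i => by simpa using (abs_le.mp (abs_le_of_mem_refBall hv i)).1,
     fun i => by simpa using (abs_le.mp (abs_le_of_mem_refBall hv i)).2⟩

theorem refBall_subset_succ (r : ℕ) : refBall d ρ p r ⊆ refBall d ρ p (r + 1) :=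
  fun _ hv => ⟨hv.1, hv.2.trans r.le_succ⟩

end Geometry

section Torus

open scoped Classical

variable {d ρ : ℕ} {p : ℝ≥0∞} [Fact (1 ≤ p)] {n : ℕ}

theorem torus_degree_le [NeZero n] (y : Vtx d n) :
    (torus d ρ p n).degree y ≤ (2 * ρ + 1) ^ d := by
  let box : Finset (Fin d → ℤ) := Fintype.piFinset fun _ => Finset.Icc (-(ρ : ℤ)) ρ
  have hsub : (torus d ρ p n).neighborFinset y ⊆
      box.image fun z => y + fun i => (z i : ZMod n) := by
    intro y' hy'
    obtain ⟨-, z, hz, hnorm⟩ := (SimpleGraph.mem_neighborFinset _ _ _).mp hy'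
    refine Finset.mem_image.mpr ⟨z, Fintype.mem_piFinset.mpr fun i => ?_, ?_⟩
    · exact Finset.mem_Icc.mpr (abs_le.mp (abs_le_of_lpNorm_le hnorm i))
    · funext i; simp [hz i]
  calc (torus d ρ p n).degree y = ((torus d ρ p n).neighborFinset y).card :=
        ((torus d ρ p n).card_neighborFinset_eq_degree y).symm
    _ ≤ box.card := (Finset.card_le_card hsub).trans Finset.card_image_le
    _ = (2 * ρ + 1) ^ d := by
        simp only [box, Fintype.card_piFinset, Int.card_Icc, Finset.prod_const,
          Finset.card_univ, Fintype.card_fin]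
        congr 1
        omega

theorem injOn_add_intCast {L : ℕ} (hn : 2 * L < n) (x : Vtx d n) :
    Set.InjOn (fun v : Fin d → ℤ => x + fun i => (v i : ZMod n)) {v | ∀ i, |v i| ≤ L} := by
  intro u hu v hv huv
  funext i
  have hcast : (u i : ZMod n) = v i := congrFun (add_left_cancel huv) i
  have hdvd : (n : ℤ) ∣ v i - u i := ((ZMod.intCast_eq_intCast_iff _ _ _).mp hcast).dvd
  have hlt : |v i - u i| < n := by
    have := abs_sub (v i) (u i)
    have := hu i
    have := hv i
    omega
  linarith [Int.eq_zero_of_abs_lt_dvd hdvd hlt]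

theorem abs_spin (s : Bool) : |spin s| = 1 := by cases s <;> simp [spin]

def minusOn (P : Finset (Vtx d n)) (σ : Conf d n) : Conf d n :=
  fun y => if y ∈ P then false else σ y

theorem injOn_minusOn (P : Finset (Vtx d n)) :
    Set.InjOn (minusOn P) {σ | ∀ y ∈ P, σ y = true} := by
  intro σ hσ τ hτ h
  funext y
  by_cases hy : y ∈ P
  · rw [hσ y hy, hτ y hy]
  · simpa [minusOn, hy] using congrFun h y

theorem sum_spin_sub_sum_spin_minusOn [NeZero n] {P : Finset (Vtx d n)} {σ : Conf d n}
    (hσ : ∀ y ∈ P, σ y = true) :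
    ∑ y, spin (σ y) - ∑ y, spin (minusOn P σ y) = 2 * P.card := by
  rw [← Finset.sum_sub_distrib,
    ← Finset.sum_subset (Finset.subset_univ P) fun y _ hy => by simp [minusOn, hy],
    Finset.sum_congr rfl fun y hy => show spin (σ y) - spin (minusOn P σ y) = 2 by
      simp [hσ y hy, minusOn, hy, spin]; norm_num]
  simp [mul_comm]

def edgeSpin (σ : Conf d n) : Sym2 (Vtx d n) → ℝ :=
  Sym2.lift ⟨fun x y => spin (σ x) * spin (σ y), fun _ _ => mul_comm _ _⟩

theorem abs_edgeSpin (σ : Conf d n) (e : Sym2 (Vtx d n)) : |edgeSpin σ e| = 1 := by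
  induction e using Sym2.ind with
  | _ x y => simp [edgeSpin, abs_mul, abs_spin]

theorem pairSum_eq_sum [NeZero n] (σ : Conf d n) :
    pairSum d ρ p n σ = ∑ e ∈ (torus d ρ p n).edgeFinset, edgeSpin σ e := by
  rw [pairSum, tsum_fintype, Finset.sum_subtype _ fun e => SimpleGraph.mem_edgeFinset]
  rfl

theorem abs_pairSum_sub_pairSum_minusOn_le [NeZero n] (P : Finset (Vtx d n)) (σ : Conf d n) :
    |pairSum d ρ p n σ - pairSum d ρ p n (minusOn P σ)| ≤ 2 * ((2 * ρ + 1) ^ d * P.card) := by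
  rw [pairSum_eq_sum, pairSum_eq_sum]
  refine ((torus d ρ p n).abs_sum_edgeFinset_sub_le _ _ (fun e => (abs_edgeSpin σ e).le)
    (fun e => (abs_edgeSpin _ e).le) P fun e he => ?_).trans ?_
  · induction e using Sym2.ind with
    | _ x y => simp [edgeSpin, minusOn, he x (Sym2.mem_mk_left x y), he y (Sym2.mem_mk_right x y)]
  · have hdeg : ∑ y ∈ P, ((torus d ρ p n).degree y : ℝ) ≤ ∑ _y ∈ P, ((2 * ρ + 1) ^ d : ℝ) :=
      Finset.sum_le_sum fun y _ => by exact_mod_cast torus_degree_le y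
    rw [Finset.sum_const, nsmul_eq_mul] at hdeg
    linarith

theorem hamiltonian_sub_hamiltonian_minusOn_le [NeZero n] (a b : ℝ) {P : Finset (Vtx d n)}
    {σ : Conf d n} (hσ : ∀ y ∈ P, σ y = true) :
    hamiltonian d ρ p n a b σ - hamiltonian d ρ p n a b (minusOn P σ) ≤
      2 * (a + |b| * (2 * ρ + 1) ^ d) * P.card := by
  have hspin := sum_spin_sub_sum_spin_minusOn hσ
  have hpair : b * (pairSum d ρ p n σ - pairSum d ρ p n (minusOn P σ)) ≤
      |b| * (2 * ((2 * ρ + 1) ^ d * P.card)) :=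
    (le_abs_self _).trans <| (abs_mul _ _).trans_le <|
      mul_le_mul_of_nonneg_left (abs_pairSum_sub_pairSum_minusOn_le P σ) (abs_nonneg b)
  simp only [hamiltonian, tsum_fintype]
  linear_combination a * hspin + hpair

theorem weight_le_exp_mul_weight_minusOn [NeZero n] (a b : ℝ) {P : Finset (Vtx d n)}
    {σ : Conf d n} (hσ : ∀ y ∈ P, σ y = true) :
    weight d ρ p n a b σ ≤
      Real.exp (2 * (a + |b| * (2 * ρ + 1) ^ d) * P.card) * weight d ρ p n a b (minusOn P σ) := by
  rw [weight, weight, ← Real.exp_add]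
  have := hamiltonian_sub_hamiltonian_minusOn_le (ρ := ρ) (p := p) a b hσ
  exact Real.exp_le_exp.mpr (by linarith)

end Torus

section Expectation

variable {d ρ : ℕ} {p : ℝ≥0∞} [Fact (1 ≤ p)] {n : ℕ} {a b : ℝ}

theorem weight_pos (σ : Conf d n) : 0 < weight d ρ p n a b σ := Real.exp_pos _

variable [NeZero n]

theorem partZ_pos : 0 < partZ d ρ p n a b := by
  rw [partZ, tsum_fintype]
  exact Finset.sum_pos (fun σ _ => weight_pos σ) Finset.univ_nonempty

theorem expect_eq_sum (f : Conf d n → ℝ) :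
    expect d ρ p n a b f = (∑ σ, weight d ρ p n a b σ * f σ) / partZ d ρ p n a b := by
  rw [expect, tsum_fintype]

theorem abs_expect_le {f g : Conf d n → ℝ} (h : ∀ σ, |f σ| ≤ g σ) :
    |expect d ρ p n a b f| ≤ expect d ρ p n a b g := by
  rw [expect_eq_sum, expect_eq_sum, abs_div, abs_of_pos partZ_pos]
  refine div_le_div_of_nonneg_right ?_ partZ_pos.le
  calc |∑ σ, weight d ρ p n a b σ * f σ| ≤ ∑ σ, |weight d ρ p n a b σ * f σ| :=
        Finset.abs_sum_le_sum_abs _ _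
    _ ≤ ∑ σ, weight d ρ p n a b σ * g σ := Finset.sum_le_sum fun σ _ => by
        rw [abs_mul, abs_of_pos (weight_pos σ)]
        exact mul_le_mul_of_nonneg_left (h σ) (weight_pos σ).le

theorem expect_sub (f g : Conf d n → ℝ) :
    expect d ρ p n a b f - expect d ρ p n a b g = expect d ρ p n a b (fun σ => f σ - g σ) := by
  simp only [expect_eq_sum, ← sub_div, ← Finset.sum_sub_distrib, mul_sub]

theorem expect_sum {ι : Type*} (s : Finset ι) (f : ι → Conf d n → ℝ) :
    expect d ρ p n a b (fun σ => ∑ i ∈ s, f i σ) = ∑ i ∈ s, expect d ρ p n a b (f i) := by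
  simp only [expect_eq_sum, Finset.mul_sum, ← Finset.sum_div]
  rw [Finset.sum_comm]

theorem expect_indicator_le_of_injOn {A : Set (Conf d n)} {C : ℝ} (hC : 0 ≤ C)
    {f : Conf d n → Conf d n} (hf : Set.InjOn f A)
    (hw : ∀ σ ∈ A, weight d ρ p n a b σ ≤ C * weight d ρ p n a b (f σ)) :
    expect d ρ p n a b (A.indicator 1) ≤ C := by
  classical
  have hsum : ∑ σ, weight d ρ p n a b σ * A.indicator 1 σ =
      ∑ σ ∈ A.toFinset, weight d ρ p n a b σ := by
    simp only [Set.indicator_apply, Pi.one_apply, mul_ite, mul_one, mul_zero]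
    rw [← Finset.sum_filter]
    congr 1
    ext σ
    simp
  rw [expect_eq_sum, hsum, div_le_iff₀ partZ_pos, partZ, tsum_fintype]
  calc ∑ σ ∈ A.toFinset, weight d ρ p n a b σ
      ≤ ∑ σ ∈ A.toFinset, C * weight d ρ p n a b (f σ) :=
        Finset.sum_le_sum fun σ hσ => hw σ (Set.mem_toFinset.mp hσ)
    _ = C * ∑ τ ∈ A.toFinset.image f, weight d ρ p n a b τ := by
        rw [Finset.sum_image fun σ hσ τ hτ => hf (Set.mem_toFinset.mp hσ) (Set.mem_toFinset.mp hτ),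
          Finset.mul_sum]
    _ ≤ C * ∑ τ, weight d ρ p n a b τ := by
        gcongr
        · exact fun τ _ _ => (weight_pos τ).le
        · exact Finset.subset_univ _

end Expectation

section Occurrences

variable {d ρ : ℕ} {p : ℝ≥0∞} [Fact (1 ≤ p)] {r n : ℕ}

theorem occursAt_ringExt_iff (η : LocalConfig d ρ p r) (x : Vtx d n) (σ : Conf d n) :
    occursAt d ρ p (r + 1) n (ringExt d ρ p r η) x σ ↔
      occursAt d ρ p r n η x σ ∧ ∀ w ∈ refBall d ρ p (r + 1), w ∉ refBall d ρ p r →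
        σ (x + fun i => (w i : ZMod n)) = false := by
  constructor
  · intro h
    refine ⟨fun v => ?_, fun w hw hw' => ?_⟩
    · rw [h ⟨v, refBall_subset_succ r v.2⟩]; simp [ringExt, v.2]
    · rw [h ⟨w, hw⟩]; simp [ringExt, hw']
  · rintro ⟨h, hring⟩ ⟨w, hw⟩
    by_cases hw' : w ∈ refBall d ρ p r
    · rw [h ⟨w, hw'⟩]; simp [ringExt, hw']
    · rw [hring w hw hw']; simp [ringExt, hw']

theorem Xcount_eq_sum_occInd [NeZero n] (η : LocalConfig d ρ p r) (σ : Conf d n) :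
    (Xcount d ρ p r n η σ : ℝ) = ∑ x, occInd d ρ p r n η x σ := by
  classical
  rw [Xcount, Set.ncard_eq_toFinset_card', Set.toFinset_ofPred, Finset.card_filter]
  push_cast
  rfl

def refShell (d ρ : ℕ) (p : ℝ≥0∞) [Fact (1 ≤ p)] (r : ℕ) : Finset (Fin d → ℤ) :=
  (refBall_finite (d := d) (ρ := ρ) (p := p) (r + 1)).toFinset \
    (refBall_finite (d := d) (ρ := ρ) (p := p) r).toFinset

theorem mem_refShell {w : Fin d → ℤ} :
    w ∈ refShell d ρ p r ↔ w ∈ refBall d ρ p (r + 1) ∧ w ∉ refBall d ρ p r := by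
  simp [refShell]

def occursWithPlus (η : LocalConfig d ρ p r) (x : Vtx d n) (w : Fin d → ℤ) : Set (Conf d n) :=
  {σ | occursAt d ρ p r n η x σ ∧ σ (x + fun i => (w i : ZMod n)) = true}

theorem abs_occInd_ringExt_sub_le (η : LocalConfig d ρ p r) (x : Vtx d n) (σ : Conf d n) :
    |occInd d ρ p (r + 1) n (ringExt d ρ p r η) x σ - occInd d ρ p r n η x σ| ≤
      ∑ w ∈ refShell d ρ p r, (occursWithPlus η x w).indicator 1 σ := by
  have hnonneg : (0 : ℝ) ≤ ∑ w ∈ refShell d ρ p r, (occursWithPlus η x w).indicator 1 σ :=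
    Finset.sum_nonneg fun w _ => Set.indicator_nonneg (fun _ _ => zero_le_one) σ
  by_cases hext : occursAt d ρ p (r + 1) n (ringExt d ρ p r η) x σ
  · have hocc := ((occursAt_ringExt_iff η x σ).mp hext).1
    simp only [occInd, if_pos hext, if_pos hocc, sub_self, abs_zero]
    exact hnonneg
  by_cases hocc : occursAt d ρ p r n η x σ
  · obtain ⟨w, hw, hw', hplus⟩ : ∃ w ∈ refBall d ρ p (r + 1), w ∉ refBall d ρ p r ∧
        σ (x + fun i => (w i : ZMod n)) = true := by
      simpa [occursAt_ringExt_iff, hocc] using hext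
    calc |occInd d ρ p (r + 1) n (ringExt d ρ p r η) x σ - occInd d ρ p r n η x σ|
        = (occursWithPlus η x w).indicator 1 σ := by
          simp [occInd, hext, hocc, occursWithPlus, hplus]
      _ ≤ _ := Finset.single_le_sum (f := fun w => (occursWithPlus η x w).indicator 1 σ)
          (fun w _ => Set.indicator_nonneg (fun _ _ => zero_le_one) σ)
          (mem_refShell.mpr ⟨hw, hw'⟩)
  · have hext' : ¬ occursAt d ρ p (r + 1) n (ringExt d ρ p r η) x σ := fun h =>
      hocc ((occursAt_ringExt_iff η x σ).mp h).1
    simp only [occInd, if_neg hext', if_neg hocc, sub_self, abs_zero]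
    exact hnonneg

theorem exists_finset_card_eq_forall_occursWithPlus_eq_true (hn : 2 * (ρ * (r + 1)) < n)
    (η : LocalConfig d ρ p r) (x : Vtx d n) {w : Fin d → ℤ} (hw : w ∈ refShell d ρ p r) :
    ∃ P : Finset (Vtx d n), P.card = kOf d ρ p r η + 1 ∧
      ∀ σ ∈ occursWithPlus η x w, ∀ y ∈ P, σ y = true := by
  obtain ⟨hw, hw'⟩ := mem_refShell.mp hw
  let emb : (Fin d → ℤ) → Vtx d n := fun v => x + fun i => (v i : ZMod n)
  let pos : Set (Fin d → ℤ) := Subtype.val '' {v : refBall d ρ p r | η v = true}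
  have hpos_sub : pos ⊆ refBall d ρ p r := by rintro _ ⟨v, -, rfl⟩; exact v.2
  have hS_sub : insert w pos ⊆ {v | ∀ i, |v i| ≤ ((ρ * (r + 1) : ℕ) : ℤ)} := by
    rintro v (rfl | hv) i
    · exact_mod_cast abs_le_of_mem_refBall hw i
    · exact (abs_le_of_mem_refBall (hpos_sub hv) i).trans (by push_cast; nlinarith)
  have hS_fin : (insert w pos).Finite := ((refBall_finite r).subset hpos_sub).insert w
  refine ⟨(hS_fin.image emb).toFinset, ?_, ?_⟩
  · rw [← Set.ncard_eq_toFinset_card _ (hS_fin.image emb),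
      ((injOn_add_intCast hn x).mono hS_sub).ncard_image,
      Set.ncard_insert_of_notMem (fun h => hw' (hpos_sub h)) ((refBall_finite r).subset hpos_sub),
      Set.ncard_image_of_injective _ Subtype.val_injective]
    rfl
  · rintro σ ⟨hocc, hplus⟩ y hy
    obtain ⟨v, hv | ⟨v, hv, rfl⟩, rfl⟩ := (Set.Finite.mem_toFinset _).mp hy
    · subst hv; exact hplus
    · exact (hocc v).trans hv

end Occurrences

section Bound

variable {d ρ : ℕ} {p : ℝ≥0∞} [Fact (1 ≤ p)] {r n : ℕ} [NeZero n]

theorem expect_indicator_occursWithPlus_le (hn : 2 * (ρ * (r + 1)) < n) (a b : ℝ)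
    (η : LocalConfig d ρ p r) (x : Vtx d n) {w : Fin d → ℤ} (hw : w ∈ refShell d ρ p r) :
    expect d ρ p n a b ((occursWithPlus η x w).indicator 1) ≤
      Real.exp (2 * (a + |b| * (2 * ρ + 1) ^ d) * (kOf d ρ p r η + 1)) := by
  obtain ⟨P, hcard, hplus⟩ := exists_finset_card_eq_forall_occursWithPlus_eq_true hn η x hw
  refine expect_indicator_le_of_injOn (Real.exp_pos _).le
    ((injOn_minusOn P).mono fun σ hσ => hplus σ hσ) fun σ hσ => ?_
  have := weight_le_exp_mul_weight_minusOn (ρ := ρ) (p := p) a b (hplus σ hσ)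
  rwa [hcard, Nat.cast_succ] at this

theorem abs_expect_Xcount_ringExt_sub_le (hn : 2 * (ρ * (r + 1)) < n) (a b : ℝ)
    (η : LocalConfig d ρ p r) :
    |expect d ρ p n a b (fun σ => (Xcount d ρ p (r + 1) n (ringExt d ρ p r η) σ : ℝ))
        - expect d ρ p n a b (fun σ => (Xcount d ρ p r n η σ : ℝ))| ≤
      n ^ d * (refShell d ρ p r).card *
        Real.exp (2 * (a + |b| * (2 * ρ + 1) ^ d) * (kOf d ρ p r η + 1)) := by
  rw [expect_sub]
  calc _ ≤ expect d ρ p n a b (fun σ =>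
          ∑ x, ∑ w ∈ refShell d ρ p r, (occursWithPlus η x w).indicator 1 σ) :=
        abs_expect_le fun σ => by
          rw [Xcount_eq_sum_occInd, Xcount_eq_sum_occInd, ← Finset.sum_sub_distrib]
          exact (Finset.abs_sum_le_sum_abs _ _).trans
            (Finset.sum_le_sum fun x _ => abs_occInd_ringExt_sub_le η x σ)
    _ = ∑ x, ∑ w ∈ refShell d ρ p r,
          expect d ρ p n a b ((occursWithPlus η x w).indicator 1) := by
        rw [expect_sum]
        exact Finset.sum_congr rfl fun x _ => expect_sum _ _
    _ ≤ ∑ _x : Vtx d n, ∑ _w ∈ refShell d ρ p r,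
          Real.exp (2 * (a + |b| * (2 * ρ + 1) ^ d) * (kOf d ρ p r η + 1)) :=
        Finset.sum_le_sum fun x _ => Finset.sum_le_sum fun w hw =>
          expect_indicator_occursWithPlus_le hn a b η x hw
    _ = _ := by simp [Finset.card_univ, ZMod.card, mul_assoc]

end Bound

theorem pow_mul_mul_rpow_neg_div_pow_succ {x : ℝ} (hx : 0 < x) (c : ℝ) (d : ℕ) {k : ℕ}
    (hk : 0 < k) :
    x ^ d * (c * x ^ (-(d : ℝ) / k)) ^ (k + 1) = c ^ (k + 1) * x ^ (-(d : ℝ) / k) := by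
  have hk' : (k : ℝ) ≠ 0 := Nat.cast_ne_zero.mpr hk.ne'
  rw [mul_pow, ← Real.rpow_natCast (x ^ _), ← Real.rpow_mul hx.le, ← Real.rpow_natCast x d,
    mul_left_comm, ← Real.rpow_add hx]
  congr 2
  field_simp
  push_cast
  ring

theorem stmt_5_general
    (d ρ r : ℕ) (hd : 1 ≤ d) (p : ℝ≥0∞) [Fact (1 ≤ p)]
    (η : LocalConfig d ρ p r) (hk : 1 ≤ kOf d ρ p r η)
    (c : ℝ) (b : ℝ) (a : ℕ → ℝ)
    (ha : ∀ n : ℕ, 0 < n →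
      Real.exp (2 * a n) = c * (n : ℝ) ^ (-(d : ℝ) / (kOf d ρ p r η : ℝ))) :
    Filter.Tendsto
      (fun n : ℕ =>
        |expect d ρ p n (a n) b (fun σ => (Xcount d ρ p (r + 1) n (ringExt d ρ p r η) σ : ℝ))
          - expect d ρ p n (a n) b (fun σ => (Xcount d ρ p r n η σ : ℝ))|)
      Filter.atTop (nhds 0) := by
  set k := kOf d ρ p r η
  set C := (refShell d ρ p r).card * c ^ (k + 1) *
    Real.exp (2 * (|b| * (2 * ρ + 1) ^ d) * (k + 1))
  have hbound : ∀ᶠ n : ℕ in atTop,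
      |expect d ρ p n (a n) b (fun σ => (Xcount d ρ p (r + 1) n (ringExt d ρ p r η) σ : ℝ))
          - expect d ρ p n (a n) b (fun σ => (Xcount d ρ p r n η σ : ℝ))| ≤
        C * (n : ℝ) ^ (-(d : ℝ) / k) := by
    filter_upwards [eventually_gt_atTop (2 * (ρ * (r + 1)))] with n hn
    have hn0 : 0 < n := by omega
    have : NeZero n := ⟨hn0.ne'⟩
    have hexp : Real.exp (2 * (a n + |b| * (2 * ρ + 1) ^ d) * (k + 1)) =
        Real.exp (2 * a n) ^ (k + 1) * Real.exp (2 * (|b| * (2 * ρ + 1) ^ d) * (k + 1)) := by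
      rw [← Real.exp_nat_mul, ← Real.exp_add]
      push_cast
      ring_nf
    refine (abs_expect_Xcount_ringExt_sub_le hn (a n) b η).trans_eq ?_
    rw [hexp, ha n hn0]
    linear_combination ((refShell d ρ p r).card *
        Real.exp (2 * (|b| * (2 * ρ + 1) ^ d) * (k + 1))) *
      pow_mul_mul_rpow_neg_div_pow_succ (Nat.cast_pos.mpr hn0) c d hk
  have hdecay : Tendsto (fun n : ℕ => (n : ℝ) ^ (-(d : ℝ) / k)) atTop (nhds 0) := by
    rw [neg_div]
    have hq : 0 < (d : ℝ) / k := div_pos (by exact_mod_cast hd) (by exact_mod_cast hk)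
    exact (tendsto_rpow_neg_atTop hq).comp tendsto_natCast_atTop_atTop
  exact squeeze_zero' (Eventually.of_forall fun n => abs_nonneg _) hbound
    (by simpa using hdecay.const_mul C)

/-- **Lemma (reduction to clean configurations, expectation part).**
If `e^{2a(n)} = c n^{-d/k(η)}` then `|E_{a(n),b}[X_n(η̊)] - E_{a(n),b}[X_n(η)]| → 0`. -/
theorem stmt_5
    (d ρ r : ℕ) (hd : 1 ≤ d) (hρ : 1 ≤ ρ) (p : ℝ≥0∞) [Fact (1 ≤ p)]
    (η : LocalConfig d ρ p r) (hk : 1 ≤ kOf d ρ p r η)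
    (c : ℝ) (hc : 0 < c) (b : ℝ) (a : ℕ → ℝ)
    (ha : ∀ n : ℕ, 0 < n →
      Real.exp (2 * a n) = c * (n : ℝ) ^ (-(d : ℝ) / (kOf d ρ p r η : ℝ))) :
    Filter.Tendsto
      (fun n : ℕ =>
        |expect d ρ p n (a n) b (fun σ => (Xcount d ρ p (r + 1) n (ringExt d ρ p r η) σ : ℝ))
          - expect d ρ p n (a n) b (fun σ => (Xcount d ρ p r n η σ : ℝ))|)
      Filter.atTop (nhds 0) :=
  stmt_5_general d ρ r hd p η hk c b a ha

end

end Ising
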